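/- Let f, g ∈ Aut(T) be conjugate by a finite-state automorphism h (i.e. h⁻¹fh = g with h finite-state). Then f has finite orbit-signalizer if and only if g has finite orbit-signalizer. -/

import Mathlib

open List

/-- Vertices of the rooted `d`-ary tree `T`: finite words over the alphabet
`X = Fin d`. -/
abbrev Vertex (d : ℕ) := List (Fin d)

/-- `g` is an automorphism of the rooted `d`-ary tree: a bijection of the
vertex set `X*` preserving word length and the prefix relation. -/
def IsTreeAut {d : ℕ} (g : Equiv.Perm (Vertex d)) : Prop :=
  (∀ v : Vertex d, (g v).length = v.length) ∧
    ∀ v w : Vertex d, g v <+: g (v ++ w)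

theorem IsTreeAut.prefix_mono {d : ℕ} {g : Equiv.Perm (Vertex d)} (hg : IsTreeAut g)
    {u u' : Vertex d} (h : u <+: u') : g u <+: g u' := by
  obtain ⟨t, rfl⟩ := h
  exact hg.2 u t

/-- The automorphism group `Aut(T)` of the rooted `d`-ary tree, as a subgroup
of the group of permutations of the vertex set. -/
def treeAut (d : ℕ) : Subgroup (Equiv.Perm (Vertex d)) where
  carrier := {g | IsTreeAut g}
  one_mem' := ⟨fun _ => rfl, fun v w => ⟨w, rfl⟩⟩
  mul_mem' := by
    intro g h hg hh
    obtain ⟨hg1, hg2⟩ := hg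
    obtain ⟨hh1, hh2⟩ := hh
    refine ⟨fun v => ?_, fun v w => ?_⟩
    · simp [Equiv.Perm.mul_apply, hg1, hh1]
    · obtain ⟨t, ht⟩ := hh2 v w
      simp only [Equiv.Perm.mul_apply]
      rw [← ht]
      exact hg2 (h v) t
  inv_mem' := by
    intro g hgmem
    obtain ⟨hg1, hg2⟩ := hgmem
    have hg : IsTreeAut g := ⟨hg1, hg2⟩
    have hlen' : ∀ v : Vertex d, (g⁻¹ v).length = v.length := by
      intro v
      conv_rhs => rw [← (show g (g⁻¹ v) = v from g.apply_symm_apply v)]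
      rw [hg1]
    refine ⟨hlen', fun v w => ?_⟩
    have hle : (g⁻¹ v).length ≤ (g⁻¹ (v ++ w)).length := by
      have h1 := hlen' v
      have h2 := hlen' (v ++ w)
      rw [List.length_append] at h2
      omega
    have htp : (g⁻¹ (v ++ w)).take (g⁻¹ v).length <+: g⁻¹ (v ++ w) :=
      List.take_prefix _ _
    have hgtp : g ((g⁻¹ (v ++ w)).take (g⁻¹ v).length) <+: v ++ w := by
      have := hg.prefix_mono htp
      rwa [(show g (g⁻¹ (v ++ w)) = v ++ w from g.apply_symm_apply _)] at this
    have hlen_tp : (g ((g⁻¹ (v ++ w)).take (g⁻¹ v).length)).length = v.length := by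
      rw [hg1, List.length_take, min_eq_left hle, hlen' v]
    have hveq : g ((g⁻¹ (v ++ w)).take (g⁻¹ v).length) = v := by
      have h1 := List.prefix_iff_eq_take.mp hgtp
      have h2 := List.prefix_iff_eq_take.mp (List.prefix_append v w)
      rw [h1, hlen_tp]
      exact h2.symm
    have hkey : (g⁻¹ (v ++ w)).take (g⁻¹ v).length = g⁻¹ v := by
      apply g.injective
      rw [hveq, (show g (g⁻¹ v) = v from g.apply_symm_apply v)]
    rw [← hkey]
    exact htp

open scoped Classical in
/-- The state (section) `g|_v` of `g` at the vertex `v` : the unique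
automorphism satisfying `g (v ++ w) = g v ++ (g|_v) w` for all `w`. -/
noncomputable def state {d : ℕ} (g : Equiv.Perm (Vertex d)) (v : Vertex d) :
    Equiv.Perm (Vertex d) :=
  if h : Function.Bijective (fun w : Vertex d => (g (v ++ w)).drop v.length) then
    Equiv.ofBijective _ h
  else 1

/-- A finite-state automorphism: one having finitely many states.  The
finite-state automorphisms form the group `F(X)`. -/
def FiniteState {d : ℕ} (g : Equiv.Perm (Vertex d)) : Prop :=
  (Set.range fun v : Vertex d => state g v).Finite

/-- The cardinality of the orbit `Orb_a(v)` of the vertex `v` under the cyclic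
group generated by `a`. -/
noncomputable def orbitCard {d : ℕ} (a : Equiv.Perm (Vertex d)) (v : Vertex d) : ℕ :=
  Nat.card (Set.range fun n : ℤ => (a ^ n) v)

/-- The orbit-signalizer `OS(a) = { a^m|_v : v ∈ X^*, m = |Orb_a(v)| }`. -/
noncomputable def OS {d : ℕ} (a : Equiv.Perm (Vertex d)) : Set (Equiv.Perm (Vertex d)) :=
  {s | ∃ v : Vertex d, s = state (a ^ orbitCard a v) v}

/-- `a` has finite orbit-signalizer. -/
def FiniteOS {d : ℕ} (a : Equiv.Perm (Vertex d)) : Prop := (OS a).Finite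

/-- A self-similar (state-closed) subgroup. -/
def SelfSimilar {d : ℕ} (G : Subgroup (Equiv.Perm (Vertex d))) : Prop :=
  ∀ g ∈ G, ∀ v : Vertex d, state g v ∈ G

/-- A contracting group: there is a finite set `N ⊆ G` such that every
`g ∈ G` has all its states in `N` from some level on. -/
def ContractingGroup {d : ℕ} (G : Subgroup (Equiv.Perm (Vertex d))) : Prop :=
  ∃ N : Set (Equiv.Perm (Vertex d)), N.Finite ∧ N ⊆ (G : Set (Equiv.Perm (Vertex d))) ∧
    ∀ g ∈ G, ∃ n : ℕ, ∀ v : Vertex d, n ≤ v.length → state g v ∈ N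

/-- A contracting automorphism: the self-similar group generated by all of its
states is contracting. -/
def ContractingAut {d : ℕ} (f : Equiv.Perm (Vertex d)) : Prop :=
  ContractingGroup (Subgroup.closure (Set.range fun v : Vertex d => state f v))

/-- The activity sequence `θ_k(g)`: the number of vertices `v` of level `k`
whose state `g|_v` acts nontrivially on the first level `X`. -/
noncomputable def theta {d : ℕ} (g : Equiv.Perm (Vertex d)) (k : ℕ) : ℕ :=
  Nat.card {v : Vertex d // v.length = k ∧ ∃ x : Fin d, state g v [x] ≠ [x]}

/-- A bounded automorphism: a finite-state automorphism with bounded activity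
sequence.  The bounded automorphisms form the group `Pol(0)`. -/
def BoundedAut {d : ℕ} (g : Equiv.Perm (Vertex d)) : Prop :=
  FiniteState g ∧ ∃ C : ℕ, ∀ k : ℕ, theta g k ≤ C

/-- A polynomial automorphism (an element of `Pol(∞)`): a finite-state
automorphism whose activity sequence is polynomially bounded. -/
def PolyAut {d : ℕ} (g : Equiv.Perm (Vertex d)) : Prop :=
  FiniteState g ∧ ∃ p : Polynomial ℕ, ∀ k : ℕ, theta g k ≤ p.eval k

/-- A finitary automorphism (an element of `Pol(-1)`): all states at some
level are trivial. -/
def Finitary {d : ℕ} (g : Equiv.Perm (Vertex d)) : Prop :=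
  ∃ k : ℕ, ∀ v : Vertex d, v.length = k → state g v = 1

/-- A functionally recursive automorphism: a member of some finitely generated
self-similar subgroup of `Aut(T)`.  These form the group `FR(X)`. -/
def FunctionallyRecursive {d : ℕ} (g : Equiv.Perm (Vertex d)) : Prop :=
  ∃ G : Subgroup (Equiv.Perm (Vertex d)), G ≤ treeAut d ∧ SelfSimilar G ∧
    (∃ S : Set (Equiv.Perm (Vertex d)), S.Finite ∧ G = Subgroup.closure S) ∧ g ∈ G

/-! Conjugation by `h` maps the `f`-orbit of `u` bijectively onto the `hfh⁻¹`-orbit of `h u`, so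
with `m = |Orb_f(u)|` the state of `(hfh⁻¹)^m` at `h u` is `h|_u · f^m|_u · (h|_u)⁻¹`, because
`f^m` fixes `u`. Hence `OS(hfh⁻¹)` is contained in the image of the finite set
`{h|_u} × OS(f)` under `(s, t) ↦ s t s⁻¹`; the converse is the same argument for `h⁻¹`,
whose states are the inverses of those of `h`. -/

namespace IsTreeAut

variable {d : ℕ} {g k : Equiv.Perm (Vertex d)}

theorem one : IsTreeAut (1 : Equiv.Perm (Vertex d)) := (treeAut d).one_mem

theorem mul (hg : IsTreeAut g) (hk : IsTreeAut k) : IsTreeAut (g * k) :=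
  (treeAut d).mul_mem hg hk

theorem inv (hg : IsTreeAut g) : IsTreeAut g⁻¹ := (treeAut d).inv_mem hg

theorem pow (hg : IsTreeAut g) (n : ℕ) : IsTreeAut (g ^ n) := (treeAut d).pow_mem hg n

theorem zpow (hg : IsTreeAut g) (n : ℤ) : IsTreeAut (g ^ n) := (treeAut d).zpow_mem hg n

theorem apply_append_eq_append_drop (hg : IsTreeAut g) (v w : Vertex d) :
    g (v ++ w) = g v ++ (g (v ++ w)).drop v.length := by
  obtain ⟨t, ht⟩ := hg.2 v w
  rw [← ht, ← hg.1 v, List.drop_left]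

theorem bijective_drop_apply_append (hg : IsTreeAut g) (v : Vertex d) :
    Function.Bijective fun w : Vertex d => (g (v ++ w)).drop v.length := by
  refine ⟨fun w₁ w₂ hw => ?_, fun u => ?_⟩
  · refine List.append_cancel_left (as := v) (g.injective ?_)
    rw [hg.apply_append_eq_append_drop v w₁, hg.apply_append_eq_append_drop v w₂]
    exact congrArg _ hw
  · obtain ⟨t, ht⟩ := hg.inv.prefix_mono (List.prefix_append (g v) u)
    simp only [Equiv.Perm.coe_inv, Equiv.symm_apply_apply] at ht
    refine ⟨t, ?_⟩
    simp only [ht, Equiv.apply_symm_apply, ← hg.1 v, List.drop_left]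

theorem state_apply (hg : IsTreeAut g) (v w : Vertex d) :
    state g v w = (g (v ++ w)).drop v.length := by
  rw [state, dif_pos (hg.bijective_drop_apply_append v)]
  rfl

theorem apply_append (hg : IsTreeAut g) (v w : Vertex d) :
    g (v ++ w) = g v ++ state g v w := by
  rw [hg.state_apply]
  exact hg.apply_append_eq_append_drop v w

theorem finite_range_zpow_apply (hg : IsTreeAut g) (v : Vertex d) :
    (Set.range fun n : ℤ => (g ^ n) v).Finite :=
  (List.finite_length_eq (Fin d) v.length).subset <| by
    rintro _ ⟨n, rfl⟩
    exact (hg.zpow n).1 v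

end IsTreeAut

section States

variable {d : ℕ} {g k : Equiv.Perm (Vertex d)}

theorem state_one (v : Vertex d) : state (1 : Equiv.Perm (Vertex d)) v = 1 := by
  ext w : 1
  simp [IsTreeAut.one.state_apply]

theorem state_mul (hg : IsTreeAut g) (hk : IsTreeAut k) (v : Vertex d) :
    state (g * k) v = state g (k v) * state k v := by
  ext w : 1
  refine List.append_cancel_left (as := (g * k) v) ?_
  rw [← (hg.mul hk).apply_append]
  simp only [Equiv.Perm.mul_apply, hk.apply_append, hg.apply_append]

theorem state_inv (hg : IsTreeAut g) (v : Vertex d) :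
    state g⁻¹ v = (state g (g⁻¹ v))⁻¹ := by
  have h := state_mul hg hg.inv v
  rw [mul_inv_cancel, state_one] at h
  exact eq_inv_of_mul_eq_one_right h.symm

theorem FiniteState.inv (hg : IsTreeAut g) (hfs : FiniteState g) : FiniteState g⁻¹ :=
  (hfs.image fun s => s⁻¹).subset <| by
    rintro _ ⟨v, rfl⟩
    exact ⟨state g (g⁻¹ v), ⟨g⁻¹ v, rfl⟩, (state_inv hg v).symm⟩

theorem state_conj_of_apply_eq_self {h : Equiv.Perm (Vertex d)} (hh : IsTreeAut h)
    (hk : IsTreeAut k) {u : Vertex d} (hu : k u = u) :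
    state (h * k * h⁻¹) (h u) = state h u * state k u * (state h u)⁻¹ := by
  rw [state_mul (hh.mul hk) hh.inv, state_mul hh hk, state_inv hh]
  simp only [Equiv.Perm.coe_inv, Equiv.symm_apply_apply, hu]

end States

theorem Equiv.Perm.pow_card_range_zpow_apply {α : Type*} (σ : Equiv.Perm α) (x : α)
    (hfin : (Set.range fun n : ℤ => (σ ^ n) x).Finite) :
    (σ ^ Nat.card (Set.range fun n : ℤ => (σ ^ n) x)) x = x := by
  have horbit : (Set.range fun n : ℤ => (σ ^ n) x) = MulAction.orbit (Subgroup.zpowers σ) x := by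
    ext y
    simp [MulAction.mem_orbit_iff, Subgroup.exists_zpowers, Subgroup.smul_def]
  rw [horbit] at hfin ⊢
  have := hfin.fintype
  rw [Nat.card_eq_fintype_card, ← MulAction.minimalPeriod_eq_card]
  have hperiod := Function.iterate_minimalPeriod (f := (σ • ·)) (x := x)
  rwa [smul_iterate] at hperiod

section OrbitSignalizer

variable {d : ℕ} {f h : Equiv.Perm (Vertex d)}

theorem pow_orbitCard_apply (hf : IsTreeAut f) (v : Vertex d) : (f ^ orbitCard f v) v = v :=
  f.pow_card_range_zpow_apply v (hf.finite_range_zpow_apply v)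

theorem orbitCard_conj (v : Vertex d) :
    orbitCard (h * f * h⁻¹) (h v) = orbitCard f v := by
  have hrange : (Set.range fun n : ℤ => ((h * f * h⁻¹) ^ n) (h v))
      = h '' Set.range fun n : ℤ => (f ^ n) v := by
    rw [← Set.range_comp]
    congr 1
    ext n : 1
    simp [conj_zpow]
  rw [orbitCard, hrange, Nat.card_image_of_injective h.injective, orbitCard]

theorem OS_conj_subset (hf : IsTreeAut f) (hh : IsTreeAut h) :
    OS (h * f * h⁻¹) ⊆ (fun p : Equiv.Perm (Vertex d) × Equiv.Perm (Vertex d) =>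
      p.1 * p.2 * p.1⁻¹) '' (Set.range (state h) ×ˢ OS f) := by
  rintro _ ⟨v, rfl⟩
  obtain ⟨u, rfl⟩ := h.surjective v
  rw [orbitCard_conj, conj_pow]
  exact ⟨(state h u, state (f ^ orbitCard f u) u), ⟨⟨u, rfl⟩, u, rfl⟩,
    (state_conj_of_apply_eq_self hh (hf.pow _) (pow_orbitCard_apply hf u)).symm⟩

theorem FiniteOS.conj (hf : IsTreeAut f) (hh : IsTreeAut h) (hfs : FiniteState h)
    (hFf : FiniteOS f) : FiniteOS (h * f * h⁻¹) :=
  ((hfs.prod hFf).image _).subset (OS_conj_subset hf hh)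

end OrbitSignalizer

theorem finiteOS_iff_of_conj_by_finiteState_general
    (d : ℕ) (f g h : Equiv.Perm (Vertex d))
    (hf : IsTreeAut f) (hh : IsTreeAut h)
    (hfs : FiniteState h) (hconj : h * f * h⁻¹ = g) :
    FiniteOS f ↔ FiniteOS g := by
  subst hconj
  refine ⟨FiniteOS.conj hf hh hfs, fun hFg => ?_⟩
  have hFf := FiniteOS.conj ((hh.mul hf).mul hh.inv) hh.inv (hfs.inv hh) hFg
  rwa [inv_inv, show h⁻¹ * (h * f * h⁻¹) * h = f by group] at hFf

/-- If `f, g ∈ Aut(T)` are conjugate by a finite-state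
automorphism, then `f` has finite orbit-signalizer if and only if `g` does. -/
theorem finiteOS_iff_of_conj_by_finiteState
    (d : ℕ) (hd : 2 ≤ d) (f g h : Equiv.Perm (Vertex d))
    (hf : IsTreeAut f) (hg : IsTreeAut g) (hh : IsTreeAut h)
    (hfs : FiniteState h) (hconj : h * f * h⁻¹ = g) :
    FiniteOS f ↔ FiniteOS g :=
  finiteOS_iff_of_conj_by_finiteState_general d f g h hf hh hfs hconj
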